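/- Let R be a root system in a finite-dimensional real inner product space V and let Q ∈ 𝔔(R). Then there exists a linear functional f : V → ℝ with f(α) = 1 for every α ∈ Q, if and only if the sets Q*_h (h ∈ ℤ) are pairwise disjoint, i.e. Q*_h ∩ Q*_k = ∅ whenever h ≠ k. -/

import Mathlib

/-!
If `f` is a linear functional equal to `1` on `Q`, then `f = h` on `Q*_h`, so the `Q*_h` are
disjoint. Conversely, adding an integer relation `∑ z_β β = 0` among the elements of `Q` to the
trivial expression `γ = γ` of some `γ ∈ Q` puts `γ` into `Q*_1 ∩ Q*_{1 + ∑ z_β}`; so disjointness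
forces every integer relation to have coefficient sum `0`. The functional `β ↦ 1` extends
linearly as soon as the same holds for real relations, and this is where the root system enters:
a real vector `c` is a relation iff it lies in the kernel of the integer Cartan matrix
`(2⟨β_j, β_i⟩/⟨β_i, β_i⟩)`, since a combination of the `β_i` orthogonal to every `β_i` vanishes.
The sum functional vanishes on the integer, hence rational, kernel of that matrix, so it is a
rational combination of its rows and vanishes on the real kernel as well.
-/

/-- `R` is a root system in the real inner product space `V`. -/
def IsRootSystem {V : Type*} [NormedAddCommGroup V] [InnerProductSpace ℝ V]
    (R : Set V) : Prop :=
  R.Finite ∧ (0 : V) ∉ R ∧ Submodule.span ℝ R = ⊤ ∧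
  (∀ α ∈ R, ∀ β ∈ R, ∃ k : ℤ, 2 * (inner ℝ β α : ℝ) / (inner ℝ α α : ℝ) = (k : ℝ)) ∧
  (∀ α ∈ R, ∀ β ∈ R, β - (2 * (inner ℝ β α : ℝ) / (inner ℝ α α : ℝ)) • α ∈ R) ∧
  (∀ α ∈ R, ∀ t : ℝ, t • α ∈ R → t = 1 ∨ t = -1)

/-- `Q ∈ 𝔔(R)`: (i) `Q ∩ (−Q) = ∅` and `α + β ∉ R` for all `α, β ∈ Q`;
(ii) every element of `R` is a ℤ-linear combination of elements of `Q`. -/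
def MemQSet {V : Type*} [AddCommGroup V] (R Q : Set V) : Prop :=
  Q ⊆ R ∧ (∀ α ∈ Q, -α ∉ Q) ∧ (∀ α ∈ Q, ∀ β ∈ Q, α + β ∉ R) ∧
  (∀ γ ∈ R, γ ∈ Submodule.span ℤ Q)

/-- `Q*_h`: roots that are ℤ-linear combinations of elements of `Q` with
coefficient sum `h`. -/
def Qstar {V : Type*} [AddCommGroup V] (R Q : Set V) (h : ℤ) : Set V :=
  {α ∈ R | ∃ k : V →₀ ℤ, ↑k.support ⊆ Q ∧ (k.sum fun β n => n • β) = α ∧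
    (k.sum fun _ n => n) = h}

/-- `Q*₍₁,₁₎`: roots of the form `±(β₁ − β₂)` with `β₁, β₂ ∈ Q`. -/
def Qstar11 {V : Type*} [AddCommGroup V] (R Q : Set V) : Set V :=
  {α ∈ R | ∃ β₁ ∈ Q, ∃ β₂ ∈ Q, α = β₁ - β₂ ∨ α = β₂ - β₁}

open Matrix

theorem LinearMap.exists_dual_comp_eq_of_ker_le {K M N : Type*} [Field K]
    [AddCommGroup M] [Module K M] [AddCommGroup N] [Module K N]
    (A : M →ₗ[K] N) (s : Module.Dual K M) (h : LinearMap.ker A ≤ LinearMap.ker s) :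
    ∃ g : Module.Dual K N, g ∘ₗ A = s := by
  obtain ⟨g, rfl⟩ : s ∈ LinearMap.range A.dualMap := by
    rw [LinearMap.range_dualMap_eq_dualAnnihilator_ker, Submodule.mem_dualAnnihilator]
    exact fun x hx => h hx
  exact ⟨g, rfl⟩

namespace Matrix

variable {m n : Type*} [Fintype m] [Fintype n]

theorem exists_vecMul_eq_of_dotProduct_eq_zero {K : Type*} [Field K] (N : Matrix m n K)
    (w : n → K) (h : ∀ c, N *ᵥ c = 0 → w ⬝ᵥ c = 0) : ∃ y, y ᵥ* N = w := by
  classical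
  obtain ⟨g, hg⟩ := N.mulVecLin.exists_dual_comp_eq_of_ker_le (dotProductEquiv K n w)
    fun c hc => h c hc
  refine ⟨(dotProductEquiv K m).symm g, (dotProductEquiv K n).injective (LinearMap.ext fun c => ?_)⟩
  rw [dotProductEquiv_apply_apply, ← dotProduct_mulVec, ← dotProductEquiv_apply_apply,
    LinearEquiv.apply_symm_apply, ← hg]
  rfl

theorem dotProduct_eq_zero_of_map_mulVec_eq_zero {K L : Type*} [Field K] [CommRing L]
    (f : K →+* L) (N : Matrix m n K) (w : n → K) (h : ∀ c, N *ᵥ c = 0 → w ⬝ᵥ c = 0)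
    (c : n → L) (hc : N.map f *ᵥ c = 0) : (f ∘ w) ⬝ᵥ c = 0 := by
  obtain ⟨y, rfl⟩ := N.exists_vecMul_eq_of_dotProduct_eq_zero w h
  have : f ∘ (y ᵥ* N) = (f ∘ y) ᵥ* N.map f := funext (RingHom.map_vecMul f N y)
  rw [this, ← dotProduct_mulVec, hc, dotProduct_zero]

theorem dotProduct_eq_zero_of_map_intCast_mulVec_eq_zero {L : Type*} [Field L] [CharZero L]
    (Z : Matrix m n ℤ) (w : n → ℤ) (h : ∀ z, Z *ᵥ z = 0 → w ⬝ᵥ z = 0)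
    (c : n → L) (hc : Z.map (Int.cast : ℤ → L) *ᵥ c = 0) : (Int.cast ∘ w) ⬝ᵥ c = 0 := by
  have hℚ : ∀ c : n → ℚ, Z.map (Int.cast : ℤ → ℚ) *ᵥ c = 0 → (Int.cast ∘ w) ⬝ᵥ c = 0 := by
    intro c hc
    obtain ⟨b, hb⟩ := IsLocalization.exist_integer_multiples_of_finite (nonZeroDivisors ℤ) c
    choose z hz using hb
    have hzc : Int.cast ∘ z = ((b : ℤ) : ℚ) • c := funext fun i => by simpa using hz i
    have hb0 : ((b : ℤ) : ℚ) ≠ 0 := Int.cast_ne_zero.mpr (nonZeroDivisors.coe_ne_zero b)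
    have hZz : Z *ᵥ z = 0 := funext fun i => Int.cast_injective (α := ℚ) <| by
      simpa [hzc, mulVec_smul, hc] using RingHom.map_mulVec (Int.castRingHom ℚ) Z z i
    have := congrArg (Int.castRingHom ℚ) (h z hZz)
    rw [RingHom.map_dotProduct, Int.coe_castRingHom, hzc, dotProduct_smul, smul_eq_mul] at this
    simpa [hb0] using this
  have hcℚ : (Z.map (Int.cast : ℤ → ℚ)).map (Rat.castHom L) *ᵥ c = 0 := by
    simpa [Matrix.map_map, Function.comp_def] using hc
  simpa [Function.comp_def] using
    dotProduct_eq_zero_of_map_mulVec_eq_zero (Rat.castHom L) _ _ hℚ c hcℚ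

end Matrix

def ZeroSumRelations (R : Type*) {ι M : Type*} [Semiring R] [Fintype ι] [AddCommMonoid M]
    [Module R M] (v : ι → M) : Prop :=
  ∀ c : ι → R, ∑ i, c i • v i = 0 → ∑ i, c i = 0

theorem ZeroSumRelations.exists_dual_eq_one {K ι V : Type*} [Field K] [Fintype ι]
    [AddCommGroup V] [Module K V] {v : ι → V} (h : ZeroSumRelations K v) :
    ∃ f : Module.Dual K V, ∀ i, f (v i) = 1 := by
  classical
  obtain ⟨f, hf⟩ := (Fintype.linearCombination K v).exists_dual_comp_eq_of_ker_le
    (Fintype.linearCombination K fun _ => (1 : K)) fun c hc => by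
      simpa [Fintype.linearCombination_apply] using
        h c (by simpa [Fintype.linearCombination_apply] using hc)
  refine ⟨f, fun i => ?_⟩
  simpa using LinearMap.congr_fun hf (Pi.single i 1)

section CartanMatrix

variable {ι V : Type*} [Fintype ι] [NormedAddCommGroup V] [InnerProductSpace ℝ V]

noncomputable def cartanMatrix (v : ι → V) : Matrix ι ι ℝ :=
  fun i j => 2 * inner ℝ (v j) (v i) / inner ℝ (v i) (v i)

theorem cartanMatrix_mulVec_apply (v : ι → V) (c : ι → ℝ) (i : ι) :
    (cartanMatrix v *ᵥ c) i = 2 * inner ℝ (∑ j, c j • v j) (v i) / inner ℝ (v i) (v i) := by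
  simp only [Matrix.mulVec, dotProduct, cartanMatrix, sum_inner, real_inner_smul_left,
    Finset.mul_sum, Finset.sum_div]
  exact Finset.sum_congr rfl fun j _ => by ring

theorem cartanMatrix_mulVec_eq_zero_iff {v : ι → V} (hv : ∀ i, v i ≠ 0) (c : ι → ℝ) :
    cartanMatrix v *ᵥ c = 0 ↔ ∑ i, c i • v i = 0 := by
  simp only [funext_iff, cartanMatrix_mulVec_apply, Pi.zero_apply, div_eq_zero_iff,
    mul_eq_zero, two_ne_zero, false_or, inner_self_eq_zero, hv, or_false]
  refine ⟨fun h => ?_, fun h i => by rw [h, inner_zero_left]⟩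
  set x := ∑ i, c i • v i with hx
  rw [← inner_self_eq_zero (𝕜 := ℝ)]
  nth_rewrite 2 [hx]
  simp [inner_sum, real_inner_smul_right, h]

theorem ZeroSumRelations.real_of_int {v : ι → V} (hv : ∀ i, v i ≠ 0)
    (hcartan : ∀ i j, ∃ k : ℤ, 2 * inner ℝ (v j) (v i) / inner ℝ (v i) (v i) = k)
    (h : ZeroSumRelations ℤ v) : ZeroSumRelations ℝ v := by
  choose Z hZ using hcartan
  have hC : cartanMatrix v = Matrix.map Z Int.cast := Matrix.ext hZ
  intro c hc
  have hZker : ∀ z, Z *ᵥ z = 0 → (1 : ι → ℤ) ⬝ᵥ z = 0 := by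
    intro z hz
    have hz' : cartanMatrix v *ᵥ (Int.cast ∘ z) = 0 := by
      rw [hC]
      funext i
      simpa [hz] using (RingHom.map_mulVec (Int.castRingHom ℝ) Z z i).symm
    rw [cartanMatrix_mulVec_eq_zero_iff hv] at hz'
    rw [one_dotProduct]
    exact h z (by simpa [Int.cast_smul_eq_zsmul] using hz')
  have := Matrix.dotProduct_eq_zero_of_map_intCast_mulVec_eq_zero Z 1 hZker c
    (hC ▸ (cartanMatrix_mulVec_eq_zero_iff hv c).mpr hc)
  rwa [show (Int.cast ∘ (1 : ι → ℤ) : ι → ℝ) = 1 from funext fun _ => Int.cast_one,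
    one_dotProduct] at this

end CartanMatrix

section Qstar

variable {V : Type*} [AddCommGroup V]

theorem intCast_eq_of_mem_Qstar {S : Type*} [Ring S] {R Q : Set V} {h : ℤ} {α : V}
    (f : V →+ S) (hf : ∀ β ∈ Q, f β = 1) (hα : α ∈ Qstar R Q h) : f α = h := by
  obtain ⟨-, k, hk, rfl, rfl⟩ := hα
  rw [map_finsuppSum, Finsupp.sum, Finsupp.sum, Int.cast_sum]
  exact Finset.sum_congr rfl fun β hβ => by rw [map_zsmul, hf β (hk hβ), zsmul_one]

theorem mem_Qstar_of_sum_smul_eq {R Q : Set V} [Fintype Q] {α : V} (hα : α ∈ R) (z : Q → ℤ)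
    (hz : ∑ i, z i • (i : V) = α) : α ∈ Qstar R Q (∑ i, z i) := by
  classical
  refine ⟨hα, Finsupp.mapDomain Subtype.val (Finsupp.equivFunOnFinite.symm z), ?_, ?_, ?_⟩
  · intro β hβ
    obtain ⟨i, -, rfl⟩ := Finset.mem_image.mp (Finsupp.mapDomain_support hβ)
    exact i.2
  · rw [Finsupp.sum_mapDomain_index (h := fun β n => n • β) (fun _ => zero_smul ℤ _)
      fun b _ _ => add_smul _ _ b,
      Finsupp.sum_fintype _ (fun (a : Q) (n : ℤ) => n • (a : V)) fun _ => zero_smul ℤ _, ← hz]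
    simp
  · rw [Finsupp.sum_mapDomain_index (h := fun _ n => n) (fun _ => rfl) fun _ _ _ => rfl,
      Finsupp.sum_fintype _ _ fun _ => rfl]
    simp

theorem zeroSumRelations_of_Qstar_disjoint {R Q : Set V} [Fintype Q] (hQR : Q ⊆ R)
    (hdisj : ∀ h k : ℤ, h ≠ k → Qstar R Q h ∩ Qstar R Q k = ∅) :
    ZeroSumRelations ℤ (Subtype.val : Q → V) := by
  classical
  intro z hz
  rcases isEmpty_or_nonempty Q with hQ | hQ
  · simp
  obtain ⟨γ⟩ := hQ
  have h₁ : (γ : V) ∈ Qstar R Q 1 := by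
    simpa using mem_Qstar_of_sum_smul_eq (hQR γ.2) (Pi.single γ 1) (by simp)
  have h₂ : (γ : V) ∈ Qstar R Q (1 + ∑ i, z i) := by
    have hsum : ∑ i, (Pi.single γ 1 + z : Q → ℤ) i = 1 + ∑ i, z i := by
      simp [Finset.sum_add_distrib]
    exact hsum ▸ mem_Qstar_of_sum_smul_eq (hQR γ.2) (Pi.single γ 1 + z)
      (by simpa [add_smul, Finset.sum_add_distrib] using hz)
  by_contra hne
  exact (Set.eq_empty_iff_forall_notMem.mp (hdisj 1 _ (by omega))) γ ⟨h₁, h₂⟩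

end Qstar

theorem stmt_12_general {V : Type*} [NormedAddCommGroup V] [InnerProductSpace ℝ V]
    (R : Set V) (hR : IsRootSystem R) (Q : Set V) (hQ : MemQSet R Q) :
    (∃ f : V →ₗ[ℝ] ℝ, ∀ α ∈ Q, f α = 1) ↔
    (∀ h k : ℤ, h ≠ k → Qstar R Q h ∩ Qstar R Q k = ∅) := by
  obtain ⟨hRfin, hR0, -, hRint, -, -⟩ := hR
  obtain ⟨hQR, -, -, -⟩ := hQ
  constructor
  · rintro ⟨f, hf⟩ h k hne
    refine Set.eq_empty_of_forall_notMem fun α ⟨hαh, hαk⟩ => hne ?_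
    exact_mod_cast (intCast_eq_of_mem_Qstar f.toAddMonoidHom hf hαh).symm.trans
      (intCast_eq_of_mem_Qstar f.toAddMonoidHom hf hαk)
  · intro hdisj
    have := (hRfin.subset hQR).fintype
    obtain ⟨f, hf⟩ := ((zeroSumRelations_of_Qstar_disjoint hQR hdisj).real_of_int
      (fun i hi => hR0 (hi ▸ hQR i.2)) fun i j => hRint _ (hQR i.2) _ (hQR j.2)).exists_dual_eq_one
    exact ⟨f, fun α hα => hf ⟨α, hα⟩⟩

/-- Criterion for the J-property of the CR algebra of the complete flag
determined by `Q`: there is a linear functional equal to `1` on `Q`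
iff the sets `Q*_h` are pairwise disjoint (i.e. `⊕ 𝔤^{(h)}` is a ℤ-gradation). -/
theorem stmt_12 {V : Type*} [NormedAddCommGroup V] [InnerProductSpace ℝ V]
    [FiniteDimensional ℝ V]
    (R : Set V) (hR : IsRootSystem R) (Q : Set V) (hQ : MemQSet R Q) :
    (∃ f : V →ₗ[ℝ] ℝ, ∀ α ∈ Q, f α = 1) ↔
    (∀ h k : ℤ, h ≠ k → Qstar R Q h ∩ Qstar R Q k = ∅) :=
  stmt_12_general R hR Q hQ
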